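/- Let t ≥ 1 and let f : (Fin (2t) → ZMod 2) → ZMod 2 be a bent function (nonlinearity Nl(f) = 2^{2t−1} − 2^{t−1}) with f(0) = 0. Then the Cayley graph G_f of Z_2^{2t} with connection set the support Ω_f is a strongly regular graph with λ = μ: there exist natural numbers k and λ such that G_f satisfies IsSRGWith 2^{2t} k λ λ. -/

import Mathlib

/-- The nonlinearity of a Boolean function `f`: the minimum Hamming distance from `f`
to an affine function `x ↦ a·x + c`. -/
noncomputable def nonlinearity {n : ℕ} (f : (Fin n → ZMod 2) → ZMod 2) : ℕ :=
  sInf {d : ℕ | ∃ (a : Fin n → ZMod 2) (c : ZMod 2),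
    d = (Finset.univ.filter (fun x : Fin n → ZMod 2 =>
      f x ≠ (∑ i, a i * x i) + c)).card}

/-- The Cayley graph of `Z_2^n` with connection set the support of `f`:
distinct vertices `u`, `v` are adjacent iff `f (u + v) = 1`. -/
def cayleyGraph {n : ℕ} (f : (Fin n → ZMod 2) → ZMod 2) :
    SimpleGraph (Fin n → ZMod 2) :=
  SimpleGraph.fromRel (fun u v => f (u + v) = 1)

instance {n : ℕ} (f : (Fin n → ZMod 2) → ZMod 2) :
    DecidableRel (cayleyGraph f).Adj := fun u v =>
  inferInstanceAs (Decidable (u ≠ v ∧ (f (u + v) = 1 ∨ f (v + u) = 1)))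

/-!
For a bent function in `2t` variables, the nonlinearity bound gives `|W_f(a)| ≤ 2^t` for every
Walsh coefficient, and Parseval's identity `∑ₐ W_f(a)² = 2^{4t}` forces equality everywhere.
Fourier inversion of `W_f²` then makes the autocorrelation `∑ₓ (-1)^{f(x) + f(x + d)}` vanish for
all `d ≠ 0`. The number of common neighbours of `u ≠ v` in `G_f` is
`#{x | f x = 1 = f (x + u + v)}`, an affine function of the autocorrelation at `u + v`, hence
equals `|Ω_f| - 2^{2t-2}` whether or not `u` and `v` are adjacent.
-/

open Finset

namespace BooleanFunction

def signChar : AddChar (ZMod 2) ℤ where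
  toFun b := if b = 0 then 1 else -1
  map_zero_eq_one' := rfl
  map_add_eq_mul' := by decide

lemma signChar_one : signChar 1 = -1 := rfl

lemma signChar_add_eq_one_sub_two_mul (u v : ZMod 2) :
    signChar (u + v) = 1 - 2 * if u ≠ v then 1 else 0 := by
  revert u v; decide

lemma signChar_add_of_ne_zero (b : ZMod 2) {c : ZMod 2} (hc : c ≠ 0) :
    signChar (b + c) = -signChar b := by
  revert b c; decide

section Walsh

variable {ι : Type*} [Fintype ι] [DecidableEq ι]

lemma sum_signChar_dotProduct (y : ι → ZMod 2) :
    ∑ a : ι → ZMod 2, signChar (a ⬝ᵥ y) = if y = 0 then 2 ^ Fintype.card ι else 0 := by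
  split_ifs with hy
  · simp [hy]
  obtain ⟨i, hi⟩ : ∃ i, y i ≠ 0 := Function.ne_iff.mp hy
  have hflip (a : ι → ZMod 2) : signChar ((a + Pi.single i 1) ⬝ᵥ y) = -signChar (a ⬝ᵥ y) := by
    rw [add_dotProduct, single_one_dotProduct, signChar_add_of_ne_zero _ hi]
  have hshift := Fintype.sum_equiv (Equiv.addRight (Pi.single i 1))
    (fun a => signChar ((a + Pi.single i 1) ⬝ᵥ y)) (fun a => signChar (a ⬝ᵥ y)) fun _ => rfl
  simp only [hflip, sum_neg_distrib] at hshift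
  linarith

def walsh (f : (ι → ZMod 2) → ZMod 2) (a : ι → ZMod 2) : ℤ :=
  ∑ x, signChar (f x + a ⬝ᵥ x)

def autocorrelation (f : (ι → ZMod 2) → ZMod 2) (d : ι → ZMod 2) : ℤ :=
  ∑ x, signChar (f x + f (x + d))

variable (f : (ι → ZMod 2) → ZMod 2)

lemma signChar_mul_walsh (a : ι → ZMod 2) (c : ZMod 2) :
    signChar c * walsh f a = 2 ^ Fintype.card ι - 2 * #{x | f x ≠ a ⬝ᵥ x + c} := by
  have hterm (x : ι → ZMod 2) :
      signChar c * signChar (f x + a ⬝ᵥ x) = 1 - 2 * if f x ≠ a ⬝ᵥ x + c then 1 else 0 := by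
    rw [← AddChar.map_add_eq_mul, ← signChar_add_eq_one_sub_two_mul]
    ring_nf
  rw [walsh, mul_sum, sum_congr rfl fun x _ => hterm x]
  simp only [sum_sub_distrib, ← mul_sum, sum_boole]
  simp

lemma sum_walsh_sq_mul_signChar (d : ι → ZMod 2) :
    ∑ a, walsh f a ^ 2 * signChar (a ⬝ᵥ d) = 2 ^ Fintype.card ι * autocorrelation f d := by
  have hsolve (x y : ι → ZMod 2) : x + y + d = 0 ↔ y = x + d := by
    rw [add_right_comm, add_eq_zero_iff_eq_neg, ZModModule.neg_eq_self, eq_comm]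
  calc ∑ a, walsh f a ^ 2 * signChar (a ⬝ᵥ d)
      = ∑ x, ∑ y, signChar (f x + f y) * ∑ a, signChar (a ⬝ᵥ (x + y + d)) := by
        simp only [sq, walsh, sum_mul, mul_sum]
        rw [sum_comm]
        refine sum_congr rfl fun x _ => ?_
        rw [sum_comm]
        refine sum_congr rfl fun y _ => sum_congr rfl fun a _ => ?_
        simp only [dotProduct_add, AddChar.map_add_eq_mul]
        ring
    _ = ∑ x, 2 ^ Fintype.card ι * signChar (f x + f (x + d)) := by
        simp only [sum_signChar_dotProduct, hsolve, mul_ite, mul_zero]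
        simp only [mul_comm, sum_ite_eq', mem_univ, if_true]
    _ = 2 ^ Fintype.card ι * autocorrelation f d := by rw [autocorrelation, mul_sum]

lemma autocorrelation_zero : autocorrelation f 0 = 2 ^ Fintype.card ι := by
  simp [autocorrelation, ZModModule.add_self]

lemma sum_walsh_sq : ∑ a, walsh f a ^ 2 = 2 ^ Fintype.card ι * 2 ^ Fintype.card ι := by
  simpa [autocorrelation_zero] using sum_walsh_sq_mul_signChar f 0

lemma walsh_sq_eq_of_forall_le (h : ∀ a, walsh f a ^ 2 ≤ 2 ^ Fintype.card ι) (a : ι → ZMod 2) :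
    walsh f a ^ 2 = 2 ^ Fintype.card ι := by
  refine (h a).antisymm (not_lt.mp fun hlt => ?_)
  have := sum_lt_sum (fun b _ => h b) ⟨a, mem_univ a, hlt⟩
  simp [sum_walsh_sq] at this

lemma autocorrelation_eq_zero_of_walsh_sq_eq (h : ∀ a, walsh f a ^ 2 = 2 ^ Fintype.card ι)
    {d : ι → ZMod 2} (hd : d ≠ 0) : autocorrelation f d = 0 := by
  have := sum_walsh_sq_mul_signChar f d
  simp only [h, ← mul_sum, sum_signChar_dotProduct, if_neg hd, mul_zero] at this
  exact (mul_eq_zero.mp this.symm).resolve_left (by positivity)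

lemma sum_signChar_apply :
    ∑ x, signChar (f x) = 2 ^ Fintype.card ι - 2 * #{x | f x = 1} := by
  have hsign (u : ZMod 2) : signChar u = 1 - 2 * if u = 1 then 1 else 0 := by
    revert u; decide
  simp only [hsign, sum_sub_distrib, ← mul_sum, sum_boole]
  simp

lemma four_mul_card_support_inter_translate (d : ι → ZMod 2) :
    4 * (#{x | f x = 1 ∧ f (x + d) = 1} : ℤ)
      = 4 * #{x | f x = 1} - 2 ^ Fintype.card ι + autocorrelation f d := by
  have hindicator (u v : ZMod 2) : 4 * (if u = 1 ∧ v = 1 then 1 else 0 : ℤ)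
      = 1 - signChar u - signChar v + signChar (u + v) := by
    revert u v; decide
  have htranslate : ∑ x, signChar (f (x + d)) = ∑ x, signChar (f x) :=
    Fintype.sum_equiv (Equiv.addRight d) _ _ fun _ => rfl
  calc 4 * (#{x | f x = 1 ∧ f (x + d) = 1} : ℤ)
      = ∑ x, (1 - signChar (f x) - signChar (f (x + d)) + signChar (f x + f (x + d))) := by
        simp only [← hindicator, ← mul_sum, sum_boole]
    _ = 4 * #{x | f x = 1} - 2 ^ Fintype.card ι + autocorrelation f d := by
        simp only [sum_add_distrib, sum_sub_distrib, htranslate, sum_signChar_apply,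
          autocorrelation, sum_const, card_univ, Fintype.card_pi, ZMod.card, prod_const,
          Int.nsmul_eq_mul, Nat.cast_pow, Nat.cast_ofNat, mul_one]
        ring

end Walsh

lemma abs_walsh_le {n : ℕ} (f : (Fin n → ZMod 2) → ZMod 2) (a : Fin n → ZMod 2) :
    |walsh f a| ≤ 2 ^ n - 2 * nonlinearity f := by
  have hle (c : ZMod 2) : (nonlinearity f : ℤ) ≤ #{x | f x ≠ a ⬝ᵥ x + c} :=
    Nat.cast_le.mpr (Nat.sInf_le ⟨a, c, rfl⟩)
  have h0 := signChar_mul_walsh f a 0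
  have h1 := signChar_mul_walsh f a 1
  simp only [AddChar.map_zero_eq_one, one_mul, signChar_one, neg_one_mul, Fintype.card_fin]
    at h0 h1
  rw [abs_le]
  constructor <;> linarith [hle 0, hle 1]

lemma walsh_sq_le_of_nonlinearity_eq {t : ℕ} (ht : 1 ≤ t)
    {f : (Fin (2 * t) → ZMod 2) → ZMod 2}
    (hbent : nonlinearity f = 2 ^ (2 * t - 1) - 2 ^ (t - 1)) (a : Fin (2 * t) → ZMod 2) :
    walsh f a ^ 2 ≤ 2 ^ (2 * t) := by
  have hbound : (2 : ℤ) ^ (2 * t) - 2 * nonlinearity f = 2 ^ t := by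
    obtain ⟨s, rfl⟩ : ∃ s, t = s + 1 := ⟨t - 1, by omega⟩
    rw [hbent, Nat.cast_sub (pow_le_pow_right₀ one_le_two (by omega)),
      show 2 * (s + 1) - 1 = 2 * s + 1 by omega]
    push_cast
    ring
  calc walsh f a ^ 2 = |walsh f a| ^ 2 := (sq_abs _).symm
    _ ≤ (2 ^ t) ^ 2 := pow_le_pow_left₀ (abs_nonneg _) (hbound ▸ abs_walsh_le f a) 2
    _ = 2 ^ (2 * t) := by ring

section CayleyGraph

variable {n : ℕ} {f : (Fin n → ZMod 2) → ZMod 2}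

lemma cayleyGraph_adj (h0 : f 0 = 0) {u v : Fin n → ZMod 2} :
    (cayleyGraph f).Adj u v ↔ f (u + v) = 1 := by
  rw [cayleyGraph, SimpleGraph.fromRel_adj, add_comm v u, or_self]
  refine ⟨And.right, fun h => ⟨?_, h⟩⟩
  rintro rfl
  simp [ZModModule.add_self, h0] at h

lemma cayleyGraph_degree (h0 : f 0 = 0) (v : Fin n → ZMod 2) :
    (cayleyGraph f).degree v = #{x | f x = 1} := by
  rw [← SimpleGraph.card_neighborSet_eq_degree, ← Fintype.card_subtype]
  exact Fintype.card_congr (Equiv.subtypeEquiv (Equiv.addLeft v) fun w => cayleyGraph_adj h0)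

lemma card_commonNeighbors_cayleyGraph (h0 : f 0 = 0) (u v : Fin n → ZMod 2) :
    Fintype.card ((cayleyGraph f).commonNeighbors u v)
      = #{x | f x = 1 ∧ f (x + (u + v)) = 1} := by
  rw [← Fintype.card_subtype]
  refine Fintype.card_congr (Equiv.subtypeEquiv (Equiv.addLeft u) fun w => ?_)
  rw [SimpleGraph.mem_commonNeighbors, cayleyGraph_adj h0, cayleyGraph_adj h0]
  show _ ↔ f (u + w) = 1 ∧ f (u + w + (u + v)) = 1
  rw [add_comm u w, ZModModule.add_add_add_cancel, add_comm w v]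

lemma cayleyGraph_isSRGWith_of_autocorrelation_eq_zero (h0 : f 0 = 0) (hn : 2 ≤ n)
    (hC : ∀ d ≠ 0, autocorrelation f d = 0) :
    (cayleyGraph f).IsSRGWith (2 ^ n) #{x | f x = 1}
      (#{x | f x = 1} - 2 ^ (n - 2)) (#{x | f x = 1} - 2 ^ (n - 2)) := by
  have hcommon {u v : Fin n → ZMod 2} (huv : u ≠ v) :
      Fintype.card ((cayleyGraph f).commonNeighbors u v) = #{x | f x = 1} - 2 ^ (n - 2) := by
    have hd : u + v ≠ 0 := by rwa [Ne, ← ZModModule.sub_eq_add, sub_eq_zero]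
    have hpow : (2 : ℤ) ^ n = 4 * (2 ^ (n - 2) : ℕ) := by
      rw [Nat.cast_pow, Nat.cast_ofNat, ← pow_sub_mul_pow 2 hn]
      ring
    have h4 := four_mul_card_support_inter_translate f (u + v)
    rw [hC _ hd, Fintype.card_fin, hpow] at h4
    rw [card_commonNeighbors_cayleyGraph h0]
    omega
  exact ⟨by simp, cayleyGraph_degree h0, fun _ _ huv => hcommon huv.ne,
    fun _ _ huv _ => hcommon huv⟩

end CayleyGraph

end BooleanFunction

open BooleanFunction

theorem bent_cayleyGraph_isSRG (t : ℕ) (ht : 1 ≤ t)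
    (f : (Fin (2 * t) → ZMod 2) → ZMod 2) (h0 : f 0 = 0)
    (hbent : nonlinearity f = 2 ^ (2 * t - 1) - 2 ^ (t - 1)) :
    ∃ k lam : ℕ, (cayleyGraph f).IsSRGWith (2 ^ (2 * t)) k lam lam := by
  have hflat : ∀ a, walsh f a ^ 2 = 2 ^ Fintype.card (Fin (2 * t)) :=
    walsh_sq_eq_of_forall_le f fun a => by
      simpa using walsh_sq_le_of_nonlinearity_eq ht hbent a
  exact ⟨_, _, cayleyGraph_isSRGWith_of_autocorrelation_eq_zero h0 (by omega)
    fun d hd => autocorrelation_eq_zero_of_walsh_sq_eq f hflat hd⟩
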